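/- Strong circuit elimination for symplectic matroids: let C₁, C₂ be distinct circuits of a symplectic matroid with C₁ ∪ C₂ admissible and x ∈ C₁ ∩ C₂. Then for every c ∈ C₁ Δ C₂, there exists a circuit C_c with c ∈ C_c ⊆ (C₁ ∪ C₂) − {x}. -/

import Mathlib

open Finset

/-- The ground set `E_{±n} = [n] ∪ [n]*`, where `(i, false)` denotes `i`
and `(i, true)` denotes `i*`. -/
abbrev EE (n : ℕ) := Fin n × Bool

/-- The involution `* : E_{±n} → E_{±n}`. -/
def estar {n : ℕ} (x : EE n) : EE n := (x.1, !x.2)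

/-- `S* = {x* : x ∈ S}`. -/
def starSet {n : ℕ} (S : Finset (EE n)) : Finset (EE n) := S.image estar

/-- A set is admissible if `S ∩ S* = ∅`. -/
def Admissible {n : ℕ} (S : Finset (EE n)) : Prop := Disjoint S (starSet S)

/-- An admissible ordering of `E_{±n}`, encoded by an injective rank function `w`
such that `x < y` implies `y* < x*`. -/
structure AdmOrdering (n : ℕ) where
  w : EE n → ℕ
  inj : Function.Injective w
  rev : ∀ x y, w x < w y → w (estar y) < w (estar x)

/-- The induced (componentwise) partial order on subsets:
compare the sorted lists of ranks entrywise. -/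
def setLE {n : ℕ} (o : AdmOrdering n) (A B : Finset (EE n)) : Prop :=
  List.Forall₂ (· ≤ ·) (Finset.sort (A.image o.w) (· ≤ ·)) (Finset.sort (B.image o.w) (· ≤ ·))

/-- The Maximality Property: for every admissible ordering, the family has a
unique maximal member in the induced partial order. -/
def HasUniqueMaximal {n : ℕ} (𝓑 : Set (Finset (EE n))) : Prop :=
  ∀ o : AdmOrdering n, ∃! M, M ∈ 𝓑 ∧ ∀ S ∈ 𝓑, setLE o M S → M = S

/-- A symplectic matroid: a nonempty family of equinumerous admissible subsets of
`E_{±n}` with a unique maximal member under every admissible ordering. -/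
def IsSymplecticMatroid {n : ℕ} (𝓑 : Set (Finset (EE n))) : Prop :=
  𝓑.Nonempty ∧ (∀ S ∈ 𝓑, Admissible S) ∧ (∀ S ∈ 𝓑, ∀ T ∈ 𝓑, S.card = T.card) ∧
    HasUniqueMaximal 𝓑

/-- The circuits of a family of bases: minimal admissible subsets of `E_{±n}`
contained in no member of `𝓑`. -/
def Circuits {n : ℕ} (𝓑 : Set (Finset (EE n))) : Set (Finset (EE n)) :=
  {C | Admissible C ∧ (∀ B ∈ 𝓑, ¬ C ⊆ B) ∧
    ∀ D ⊂ C, Admissible D → ∃ B ∈ 𝓑, D ⊆ B}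

/-- The bases determined by a circuit family: maximal admissible subsets of
`E_{±n}` containing no member of `𝓒`. -/
def BasesOf {n : ℕ} (𝓒 : Set (Finset (EE n))) : Set (Finset (EE n)) :=
  {B | Admissible B ∧ (∀ C ∈ 𝓒, ¬ C ⊆ B) ∧
    ∀ D, B ⊂ D → Admissible D → ∃ C ∈ 𝓒, C ⊆ D}

/-- `P` spans `x` if some `J ∈ 𝓒` has `J − P = {x}`. -/
def Spans {n : ℕ} (𝓒 : Set (Finset (EE n))) (P : Finset (EE n)) (x : EE n) : Prop :=
  ∃ J ∈ 𝓒, J \ P = {x}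

/-- Axiom (SC1). -/
def SC1 {n : ℕ} (𝓒 : Set (Finset (EE n))) : Prop := ∅ ∉ 𝓒

/-- Axiom (SC2). -/
def SC2 {n : ℕ} (𝓒 : Set (Finset (EE n))) : Prop :=
  ∀ C₁ ∈ 𝓒, ∀ C₂ ∈ 𝓒, C₁ ⊆ C₂ → C₁ = C₂

/-- Axiom (SC3): circuit elimination when the union is admissible. -/
def SC3 {n : ℕ} (𝓒 : Set (Finset (EE n))) : Prop :=
  ∀ C₁ ∈ 𝓒, ∀ C₂ ∈ 𝓒, C₁ ≠ C₂ → Admissible (C₁ ∪ C₂) →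
    ∀ x ∈ C₁ ∩ C₂, ∃ C ∈ 𝓒, C ⊆ (C₁ ∪ C₂) \ {x}

/-- Axiom (SC4): no small admissible set spans all of `E_{±n} − (P ∪ P*)`. -/
def SC4 {n : ℕ} (𝓒 : Set (Finset (EE n))) : Prop :=
  ∀ P : Finset (EE n), Admissible P → ∀ B ∈ BasesOf 𝓒, P.card < B.card →
    ∃ x, x ∉ P ∪ starSet P ∧ ¬ Spans 𝓒 P x

/-!
Call a set independent if it lies in a basis. For independent `I`, `J` with `I ∪ J` admissible and
`|I| < |J|`, take an admissible ordering ranking `I` highest and the rest of `I ∪ J` next. Every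
basis lies componentwise below the greatest basis `M`, so `M` has at least as many elements above
each rank threshold as any basis; comparing with bases containing `I` and `J` gives `I ⊆ M` and an
element of `J \ I` in `M`. This augmentation property yields weak elimination (SC3) as for ordinary
matroids, and strong elimination follows from weak elimination and the incomparability of circuits
by induction on `C₁ ∪ C₂`.
-/

namespace List.Forall₂

theorem le_trans {α : Type*} [Preorder α] {l₁ l₂ l₃ : List α} (h₁₂ : Forall₂ (· ≤ ·) l₁ l₂)
    (h₂₃ : Forall₂ (· ≤ ·) l₂ l₃) : Forall₂ (· ≤ ·) l₁ l₃ := by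
  induction h₁₂ generalizing l₃ with
  | nil => cases h₂₃; exact .nil
  | cons h _ ih => cases h₂₃ with | cons h' t' => exact .cons (h.trans h') (ih t')

theorem eq_of_sum_le {l₁ l₂ : List ℕ} (h : Forall₂ (· ≤ ·) l₁ l₂) (hs : l₂.sum ≤ l₁.sum) :
    l₁ = l₂ := by
  induction h with
  | nil => rfl
  | cons h htl ih =>
    simp only [sum_cons] at hs
    have := htl.sum_le_sum
    rw [ih (by omega)]
    congr 1
    omega

theorem countP_le_countP {α : Type*} [LinearOrder α] {l₁ l₂ : List α} (h : Forall₂ (· ≤ ·) l₁ l₂)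
    (t : α) :
    l₁.countP (t ≤ ·) ≤ l₂.countP (t ≤ ·) := by
  induction h with
  | nil => rfl
  | @cons a b _ _ h _ ih =>
    simp only [countP_cons]
    by_cases ha : t ≤ a
    · simp [ha, ha.trans h, ih]
    · by_cases hb : t ≤ b <;> simp [ha, hb] <;> omega

end List.Forall₂

section Admissible
variable {n : ℕ}

theorem Admissible.subset {S T : Finset (EE n)} (hS : Admissible S) (hTS : T ⊆ S) :
    Admissible T :=
  Disjoint.mono hTS (image_subset_image hTS) hS

theorem Admissible.exists_sign {S : Finset (EE n)} (hS : Admissible S) :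
    ∃ sg : Fin n → Bool, ∀ z ∈ S, z.2 = sg z.1 := by
  refine ⟨fun i => decide ((i, true) ∈ S), fun ⟨i, b⟩ hz => ?_⟩
  cases b
  · have : (i, true) ∉ S := fun ht => disjoint_left.1 hS hz (mem_image.2 ⟨(i, true), ht, rfl⟩)
    simpa using this
  · simpa using hz

end Admissible

section SignedRank
variable {n : ℕ} (sg : Fin n → Bool) (p : Fin n → ℕ) (N : ℕ)

def signedRank (z : EE n) : ℕ := if z.2 = sg z.1 then N + p z.1 else N - 1 - p z.1

variable {p N}

theorem signedRank_add_signedRank_estar (hpN : ∀ i, p i < N) (z : EE n) :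
    signedRank sg p N z + signedRank sg p N (estar z) = 2 * N - 1 := by
  obtain ⟨i, b⟩ := z
  have := hpN i
  unfold signedRank
  split_ifs with h₁ h₂ h₂ <;> simp only [estar] at h₁ h₂ ⊢
  all_goals first | omega | (revert h₁ h₂; cases b <;> cases sg i <;> simp)

theorem signedRank_injective (hp : Function.Injective p) (hpN : ∀ i, p i < N) :
    Function.Injective (signedRank sg p N) := by
  rintro ⟨i, b⟩ ⟨j, c⟩ hij
  have := hpN i
  have := hpN j
  simp only [signedRank] at hij
  split_ifs at hij with hb hc hc
  · obtain rfl := hp (by omega : p i = p j)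
    simp [hb, hc]
  · omega
  · omega
  · obtain rfl := hp (by omega : p i = p j)
    cases b <;> cases c <;> cases sg i <;> simp_all

theorem le_signedRank_iff (hpN : ∀ i, p i < N) (t : ℕ) (z : EE n) :
    N + t ≤ signedRank sg p N z ↔ z.2 = sg z.1 ∧ t ≤ p z.1 := by
  have := hpN z.1
  simp only [signedRank]
  split_ifs with hz <;> simp only [hz, true_and, false_and, iff_false] <;> omega

def AdmOrdering.ofSignedRank (hp : Function.Injective p) (hpN : ∀ i, p i < N) :
    AdmOrdering n where
  w := signedRank sg p N
  inj := signedRank_injective sg hp hpN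
  rev x y hxy := by
    have := signedRank_add_signedRank_estar sg hpN x
    have := signedRank_add_signedRank_estar sg hpN y
    omega

end SignedRank

theorem Admissible.exists_admOrdering_upperSets {n : ℕ} {S I : Finset (EE n)}
    (hS : Admissible S) (hIS : I ⊆ S) :
    ∃ (o : AdmOrdering n) (tI tS : ℕ), (∀ z, tI ≤ o.w z ↔ z ∈ I) ∧ (∀ z, tS ≤ o.w z ↔ z ∈ S) := by
  classical
  obtain ⟨sg, hsg⟩ := hS.exists_sign
  -- levels `2 > 1 > 0` for `I`, `S \ I` and the rest, ties broken by `i`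
  let p : Fin n → ℕ := fun i =>
    if (i, sg i) ∈ I then 2 * n + i else if (i, sg i) ∈ S then n + i else i
  have hpN : ∀ i, p i < 3 * n := fun i => by
    have := i.isLt
    simp only [p]
    split_ifs <;> omega
  have hp : Function.Injective p := fun i j hij => by
    have := i.isLt
    have := j.isLt
    simp only [p] at hij
    split_ifs at hij <;> exact Fin.ext (by omega)
  have hlevel : ∀ i, (2 * n ≤ p i ↔ (i, sg i) ∈ I) ∧ (n ≤ p i ↔ (i, sg i) ∈ S) := fun i => by
    have := i.isLt
    simp only [p]
    split_ifs with hiI hiS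
    · simp only [hiI, hIS hiI, iff_true]
      omega
    · simp only [hiI, hiS, iff_true, iff_false]
      omega
    · simp only [hiI, hiS, iff_false]
      omega
  have hsigned : ∀ T ⊆ S, ∀ z : EE n, z.2 = sg z.1 ∧ (z.1, sg z.1) ∈ T ↔ z ∈ T := by
    rintro T hT ⟨i, b⟩
    exact ⟨fun ⟨(hb : b = sg i), h⟩ => hb ▸ h, fun h => ⟨hsg _ (hT h), by rwa [← hsg _ (hT h)]⟩⟩
  refine ⟨.ofSignedRank sg hp hpN, 3 * n + 2 * n, 3 * n + n, fun z => ?_, fun z => ?_⟩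
  · rw [← hsigned I hIS z, ← (hlevel z.1).1]
    exact le_signedRank_iff sg hpN _ z
  · rw [← hsigned S subset_rfl z, ← (hlevel z.1).2]
    exact le_signedRank_iff sg hpN _ z

section SetLE
variable {n : ℕ} (o : AdmOrdering n)

theorem coe_sort_image_w (A : Finset (EE n)) :
    ((sort (A.image o.w) (· ≤ ·) : List ℕ) : Multiset ℕ) = A.val.map o.w := by
  rw [sort_eq, image_val_of_injOn o.inj.injOn]

theorem setLE_refl (A : Finset (EE n)) : setLE o A A :=
  List.forall₂_refl _

variable {o}

theorem setLE_trans {A B C : Finset (EE n)} (hAB : setLE o A B) (hBC : setLE o B C) :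
    setLE o A C :=
  List.Forall₂.le_trans hAB hBC

theorem setLE.sum_le {A B : Finset (EE n)} (h : setLE o A B) :
    ∑ a ∈ A, o.w a ≤ ∑ b ∈ B, o.w b := by
  have := h.sum_le_sum
  rwa [← Multiset.sum_coe, ← Multiset.sum_coe, coe_sort_image_w, coe_sort_image_w] at this

theorem setLE.eq_of_sum_le {A B : Finset (EE n)} (h : setLE o A B)
    (hs : ∑ b ∈ B, o.w b ≤ ∑ a ∈ A, o.w a) : A = B := by
  have hsort := List.Forall₂.eq_of_sum_le h (by
    rwa [← Multiset.sum_coe, ← Multiset.sum_coe, coe_sort_image_w, coe_sort_image_w])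
  have himage : A.image o.w = B.image o.w := by
    have := congrArg (fun l : List ℕ => (l : Multiset ℕ)) hsort
    simp only [sort_eq] at this
    exact val_injective this
  exact image_injective o.inj himage

theorem setLE.card_filter_le {A B : Finset (EE n)} (h : setLE o A B) (t : ℕ) :
    #{a ∈ A | t ≤ o.w a} ≤ #{b ∈ B | t ≤ o.w b} := by
  have := h.countP_le_countP t
  rwa [← Multiset.coe_countP, ← Multiset.coe_countP, coe_sort_image_w, coe_sort_image_w,
    Multiset.countP_map, Multiset.countP_map] at this

end SetLE

section Bases
variable {n : ℕ} {𝓑 : Set (Finset (EE n))}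

theorem HasUniqueMaximal.exists_greatest (h : HasUniqueMaximal 𝓑) (o : AdmOrdering n) :
    ∃ M ∈ 𝓑, ∀ S ∈ 𝓑, setLE o S M := by
  obtain ⟨M, ⟨hM, -⟩, huniq⟩ := h o
  refine ⟨M, hM, fun S hS => ?_⟩
  -- a basis above `S` of largest weight is maximal, hence it is `M`
  obtain ⟨B, ⟨hB, hSB⟩, hBmax⟩ := Set.Finite.exists_maximalFor (fun B => ∑ b ∈ B, o.w b)
    {B | B ∈ 𝓑 ∧ setLE o S B} (Set.toFinite _) ⟨S, hS, setLE_refl o S⟩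
  have hBmaximal : ∀ B' ∈ 𝓑, setLE o B B' → B = B' := fun B' hB' hBB' =>
    hBB'.eq_of_sum_le (hBmax ⟨hB', setLE_trans hSB hBB'⟩ hBB'.sum_le)
  exact huniq B ⟨hB, hBmaximal⟩ ▸ hSB

theorem HasUniqueMaximal.exists_card_inter_le {S I : Finset (EE n)} (h : HasUniqueMaximal 𝓑)
    (hS : Admissible S) (hIS : I ⊆ S) :
    ∃ M ∈ 𝓑, ∀ B ∈ 𝓑, #(B ∩ I) ≤ #(M ∩ I) ∧ #(B ∩ S) ≤ #(M ∩ S) := by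
  obtain ⟨o, tI, tS, hwI, hwS⟩ := hS.exists_admOrdering_upperSets hIS
  obtain ⟨M, hM, hMgreatest⟩ := h.exists_greatest o
  have hfilter : ∀ (B T : Finset (EE n)) (t : ℕ), (∀ z, t ≤ o.w z ↔ z ∈ T) →
      {z ∈ B | t ≤ o.w z} = B ∩ T := fun B T t hT => by
    ext z
    simp [hT z]
  refine ⟨M, hM, fun B hB => ?_⟩
  have := (hMgreatest B hB).card_filter_le
  rw [← hfilter B I tI hwI, ← hfilter M I tI hwI, ← hfilter B S tS hwS, ← hfilter M S tS hwS]
  exact ⟨this tI, this tS⟩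

end Bases

def Indep {n : ℕ} (𝓑 : Set (Finset (EE n))) (I : Finset (EE n)) : Prop := ∃ B ∈ 𝓑, I ⊆ B

section Indep
variable {n : ℕ} {𝓑 : Set (Finset (EE n))}

theorem Indep.subset {I J : Finset (EE n)} (hJ : Indep 𝓑 J) (hIJ : I ⊆ J) : Indep 𝓑 I :=
  let ⟨B, hB, hJB⟩ := hJ
  ⟨B, hB, hIJ.trans hJB⟩

theorem HasUniqueMaximal.exists_insert_indep (h : HasUniqueMaximal 𝓑) {I J : Finset (EE n)}
    (hI : Indep 𝓑 I) (hJ : Indep 𝓑 J) (hadm : Admissible (I ∪ J)) (hcard : #I < #J) :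
    ∃ z ∈ J \ I, Indep 𝓑 (insert z I) := by
  obtain ⟨B₀, hB₀, hIB₀⟩ := hI
  obtain ⟨B₁, hB₁, hJB₁⟩ := hJ
  obtain ⟨M, hM, hMmax⟩ := h.exists_card_inter_le hadm subset_union_left
  have hIM : I ⊆ M := by
    have hcardI := (hMmax B₀ hB₀).1
    rw [inter_eq_right.2 hIB₀] at hcardI
    exact inter_eq_right.1 (eq_of_subset_of_card_le inter_subset_right hcardI)
  have hcardJ : #J ≤ #(M ∩ (I ∪ J)) := calc
    #J ≤ #(B₁ ∩ (I ∪ J)) := card_le_card (subset_inter hJB₁ subset_union_right)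
    _ ≤ #(M ∩ (I ∪ J)) := (hMmax B₁ hB₁).2
  obtain ⟨z, hzM, hzI⟩ := not_subset.1 fun hsub : M ∩ (I ∪ J) ⊆ I => by
    have := card_le_card hsub
    omega
  have hzJ : z ∈ J := (mem_union.1 (mem_inter.1 hzM).2).resolve_left hzI
  exact ⟨z, mem_sdiff.2 ⟨hzJ, hzI⟩, M, hM, insert_subset (mem_inter.1 hzM).1 hIM⟩

theorem HasUniqueMaximal.exists_indep_superset_card_le (h : HasUniqueMaximal 𝓑)
    {U I J : Finset (EE n)} (hU : Admissible U) (hIU : I ⊆ U) (hI : Indep 𝓑 I) (hJU : J ⊆ U)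
    (hJ : Indep 𝓑 J) : ∃ K, I ⊆ K ∧ K ⊆ U ∧ Indep 𝓑 K ∧ #J ≤ #K := by
  classical
  obtain ⟨K, hK, hKmax⟩ := exists_max_image {K ∈ U.powerset | I ⊆ K ∧ Indep 𝓑 K} card
    ⟨I, mem_filter.2 ⟨mem_powerset.2 hIU, subset_rfl, hI⟩⟩
  obtain ⟨hKU, hIK, hKind⟩ : K ⊆ U ∧ I ⊆ K ∧ Indep 𝓑 K := by simpa using hK
  refine ⟨K, hIK, hKU, hKind, not_lt.1 fun hlt => ?_⟩
  obtain ⟨z, hz, hzK⟩ := h.exists_insert_indep hKind hJ (hU.subset (union_subset hKU hJU)) hlt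
  obtain ⟨hzJ, hzK'⟩ := mem_sdiff.1 hz
  have := hKmax (insert z K) (mem_filter.2
    ⟨mem_powerset.2 (insert_subset (hJU hzJ) hKU), hIK.trans (subset_insert z K), hzK⟩)
  rw [card_insert_of_notMem hzK'] at this
  omega

end Indep

section Circuits
variable {n : ℕ} {𝓑 : Set (Finset (EE n))}

theorem not_indep_of_mem_circuits {C : Finset (EE n)} (hC : C ∈ Circuits 𝓑) : ¬ Indep 𝓑 C :=
  fun ⟨B, hB, hCB⟩ => hC.2.1 B hB hCB

theorem indep_of_ssubset_circuit {C D : Finset (EE n)} (hC : C ∈ Circuits 𝓑) (hDC : D ⊂ C) :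
    Indep 𝓑 D :=
  hC.2.2 D hDC (hC.1.subset hDC.subset)

theorem exists_circuit_subset_of_not_indep {A : Finset (EE n)} (hA : Admissible A)
    (hAdep : ¬ Indep 𝓑 A) : ∃ C ∈ Circuits 𝓑, C ⊆ A := by
  induction A using Finset.strongInduction with
  | H A ih =>
    by_cases hmin : ∀ D ⊂ A, Admissible D → Indep 𝓑 D
    · exact ⟨A, ⟨hA, fun B hB hAB => hAdep ⟨B, hB, hAB⟩, hmin⟩, subset_rfl⟩
    · push Not at hmin
      obtain ⟨D, hDA, hD, hDdep⟩ := hmin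
      obtain ⟨C, hC, hCD⟩ := ih D hDA hD hDdep
      exact ⟨C, hC, hCD.trans hDA.subset⟩

theorem sc2_circuits (𝓑 : Set (Finset (EE n))) : SC2 (Circuits 𝓑) := by
  intro C₁ hC₁ C₂ hC₂ hsub
  by_contra hne
  exact not_indep_of_mem_circuits hC₁ (indep_of_ssubset_circuit hC₂ (hsub.ssubset_of_ne hne))

theorem sc3_circuits (h : HasUniqueMaximal 𝓑) : SC3 (Circuits 𝓑) := by
  intro C₁ hC₁ C₂ hC₂ hne hadm x hx
  rw [sdiff_singleton_eq_erase]
  refine exists_circuit_subset_of_not_indep (hadm.subset (erase_subset x _)) fun hind => ?_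
  obtain ⟨f, hf₂, hf₁⟩ := not_subset.1 fun h => hne (sc2_circuits 𝓑 C₂ hC₂ C₁ hC₁ h).symm
  -- extend `C₂ - f` inside `C₁ ∪ C₂` to an independent set as large as `(C₁ ∪ C₂) - x`
  obtain ⟨K, hK₂, hKU, hK, hcard⟩ := h.exists_indep_superset_card_le hadm
    ((erase_subset f C₂).trans subset_union_right)
    (indep_of_ssubset_circuit hC₂ (erase_ssubset hf₂)) (erase_subset x _) hind
  have hfK : f ∉ K := fun hfK => not_indep_of_mem_circuits hC₂
    (hK.subset (insert_erase hf₂ ▸ insert_subset hfK hK₂))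
  obtain ⟨g, hg₁, hgK⟩ := not_subset.1 fun h => not_indep_of_mem_circuits hC₁ (hK.subset h)
  have hgf : g ≠ f := fun hgf => hf₁ (hgf ▸ hg₁)
  have hKsub : K ⊆ ((C₁ ∪ C₂).erase f).erase g := fun a ha =>
    mem_erase.2 ⟨fun h => hgK (h ▸ ha), mem_erase.2 ⟨fun h => hfK (h ▸ ha), hKU ha⟩⟩
  refine lt_irrefl #K (calc
    #K ≤ #(((C₁ ∪ C₂).erase f).erase g) := card_le_card hKsub
    _ < #((C₁ ∪ C₂).erase f) := card_erase_lt_of_mem (mem_erase.2 ⟨hgf, mem_union_left _ hg₁⟩)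
    _ = #((C₁ ∪ C₂).erase x) := by
      rw [card_erase_of_mem (mem_union_right _ hf₂),
        card_erase_of_mem (mem_union_left _ (mem_inter.1 hx).1)]
    _ ≤ #K := hcard)

end Circuits

theorem SC3.strong_elimination {n : ℕ} {𝓒 : Set (Finset (EE n))} (h3 : SC3 𝓒) (h2 : SC2 𝓒)
    {C₁ C₂ : Finset (EE n)} (hC₁ : C₁ ∈ 𝓒) (hC₂ : C₂ ∈ 𝓒) (hadm : Admissible (C₁ ∪ C₂))
    {x c : EE n} (hx₁ : x ∈ C₁) (hx₂ : x ∈ C₂) (hc₁ : c ∈ C₁) (hc₂ : c ∉ C₂) :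
    ∃ C ∈ 𝓒, c ∈ C ∧ C ⊆ (C₁ ∪ C₂) \ {x} := by
  obtain ⟨U, hU⟩ : ∃ U, C₁ ∪ C₂ = U := ⟨_, rfl⟩
  induction U using Finset.strongInduction generalizing C₁ C₂ x c with
  | H U ih =>
  subst hU
  obtain ⟨C₃, hC₃, hC₃sub⟩ :=
    h3 C₁ hC₁ C₂ hC₂ (by rintro rfl; exact hc₂ hc₁) hadm x (mem_inter.2 ⟨hx₁, hx₂⟩)
  by_cases hcC₃ : c ∈ C₃
  · exact ⟨C₃, hC₃, hcC₃, hC₃sub⟩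
  have hxC₃ : x ∉ C₃ := fun h => (mem_sdiff.1 (hC₃sub h)).2 (mem_singleton_self x)
  have hC₃U : C₃ ⊆ C₁ ∪ C₂ := hC₃sub.trans sdiff_subset
  obtain ⟨y, hyC₃, hyC₁⟩ := not_subset.1 fun h => hxC₃ (h2 C₃ hC₃ C₁ hC₁ h ▸ hx₁)
  have hyC₂ : y ∈ C₂ := (mem_union.1 (hC₃U hyC₃)).resolve_left hyC₁
  -- eliminate `y` from `C₂, C₃` keeping `x`, then `x` from `C₁` and the result keeping `c`
  have h23 : C₂ ∪ C₃ ⊆ C₁ ∪ C₂ := union_subset subset_union_right hC₃U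
  have hc23 : c ∉ C₂ ∪ C₃ := by simp [hc₂, hcC₃]
  obtain ⟨C₄, hC₄, hxC₄, hC₄sub⟩ := ih (C₂ ∪ C₃)
    ((ssubset_iff_of_subset h23).2 ⟨c, mem_union_left _ hc₁, hc23⟩)
    hC₂ hC₃ (hadm.subset h23) hyC₂ hyC₃ hx₂ hxC₃ rfl
  have hC₄U : C₄ ⊆ C₂ ∪ C₃ := hC₄sub.trans sdiff_subset
  have hyC₄ : y ∉ C₄ := fun h => (mem_sdiff.1 (hC₄sub h)).2 (mem_singleton_self y)
  have h14 : C₁ ∪ C₄ ⊆ C₁ ∪ C₂ := union_subset subset_union_left (hC₄U.trans h23)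
  obtain ⟨C₅, hC₅, hcC₅, hC₅sub⟩ := ih (C₁ ∪ C₄)
    ((ssubset_iff_of_subset h14).2 ⟨y, mem_union_right _ hyC₂, by simp [hyC₁, hyC₄]⟩)
    hC₁ hC₄ (hadm.subset h14) hx₁ hxC₄ hc₁ (fun h => hc23 (hC₄U h)) rfl
  exact ⟨C₅, hC₅, hcC₅, hC₅sub.trans (sdiff_subset_sdiff h14 subset_rfl)⟩

theorem strong_circuit_elimination_general {n : ℕ} (𝓑 : Set (Finset (EE n)))
    (h : IsSymplecticMatroid 𝓑) (C₁ : Finset (EE n)) (hC₁ : C₁ ∈ Circuits 𝓑)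
    (C₂ : Finset (EE n)) (hC₂ : C₂ ∈ Circuits 𝓑)
    (hadm : Admissible (C₁ ∪ C₂)) (x : EE n) (hx : x ∈ C₁ ∩ C₂) :
    ∀ c ∈ (C₁ \ C₂) ∪ (C₂ \ C₁),
      ∃ Cc ∈ Circuits 𝓑, c ∈ Cc ∧ Cc ⊆ (C₁ ∪ C₂) \ {x} := by
  have h3 : SC3 (Circuits 𝓑) := sc3_circuits h.2.2.2
  obtain ⟨hx₁, hx₂⟩ := mem_inter.1 hx
  intro c hc
  rcases mem_union.1 hc with hc | hc
  · obtain ⟨hc₁, hc₂⟩ := mem_sdiff.1 hc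
    exact h3.strong_elimination (sc2_circuits 𝓑) hC₁ hC₂ hadm hx₁ hx₂ hc₁ hc₂
  · obtain ⟨hc₂, hc₁⟩ := mem_sdiff.1 hc
    rw [union_comm] at hadm ⊢
    exact h3.strong_elimination (sc2_circuits 𝓑) hC₂ hC₁ hadm hx₂ hx₁ hc₂ hc₁

/-- strong circuit elimination: for every `c ∈ C₁ Δ C₂` there is a
circuit through `c` avoiding `x` inside `C₁ ∪ C₂`. -/
theorem strong_circuit_elimination {n : ℕ} (𝓑 : Set (Finset (EE n)))
    (h : IsSymplecticMatroid 𝓑) (C₁ : Finset (EE n)) (hC₁ : C₁ ∈ Circuits 𝓑)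
    (C₂ : Finset (EE n)) (hC₂ : C₂ ∈ Circuits 𝓑) (hne : C₁ ≠ C₂)
    (hadm : Admissible (C₁ ∪ C₂)) (x : EE n) (hx : x ∈ C₁ ∩ C₂) :
    ∀ c ∈ (C₁ \ C₂) ∪ (C₂ \ C₁),
      ∃ Cc ∈ Circuits 𝓑, c ∈ Cc ∧ Cc ⊆ (C₁ ∪ C₂) \ {x} :=
  strong_circuit_elimination_general 𝓑 h C₁ hC₁ C₂ hC₂ hadm x hx
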